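/- Merge is the least upper bound for the branching order: if B ≽ B1 and B ≽ B2 then there exists B' with merge B1 B2 B' and B ≽ B'; moreover any such B' satisfies B' ≽ B1 and B' ≽ B2. -/
import Mathlib


/-- Behaviours of Stateful Processes. Labels `left`/`right` are modelled as
`Bool` (`true` = left, `false` = right). -/
inductive Beh (P E V X : Type) : Type
  | endB : Beh P E V X
  | send : P → E → Beh P E V X → Beh P E V X
  | recv : P → V → Beh P E V X → Beh P E V X
  | sel : P → Bool → Beh P E V X → Beh P E V X
  | branch : P → Option (Beh P E V X) → Option (Beh P E V X) → Beh P E V X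
  | cond : E → Beh P E V X → Beh P E V X → Beh P E V X
  | call : X → Beh P E V X

mutual
/-- The merge relation on behaviours. -/
inductive merge {P E V X : Type} :
    Beh P E V X → Beh P E V X → Beh P E V X → Prop
  | endB : merge .endB .endB .endB
  | send {B1 B2 B} (p : P) (e : E) :
      merge B1 B2 B → merge (.send p e B1) (.send p e B2) (.send p e B)
  | recv {B1 B2 B} (p : P) (x : V) :
      merge B1 B2 B → merge (.recv p x B1) (.recv p x B2) (.recv p x B)
  | sel {B1 B2 B} (p : P) (l : Bool) :
      merge B1 B2 B → merge (.sel p l B1) (.sel p l B2) (.sel p l B)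
  | branch {l1 l2 l r1 r2 r} (p : P) :
      omerge l1 l2 l → omerge r1 r2 r →
      merge (.branch p l1 r1) (.branch p l2 r2) (.branch p l r)
  | cond {Bt1 Bt2 Bt Be1 Be2 Be} (e : E) :
      merge Bt1 Bt2 Bt → merge Be1 Be2 Be →
      merge (.cond e Bt1 Be1) (.cond e Bt2 Be2) (.cond e Bt Be)
  | call (x : X) : merge (.call x) (.call x) (.call x)

/-- Componentwise merge of optional behaviours. -/
inductive omerge {P E V X : Type} :
    Option (Beh P E V X) → Option (Beh P E V X) → Option (Beh P E V X) → Prop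
  | nn : omerge none none none
  | sn (b : Beh P E V X) : omerge (some b) none (some b)
  | ns (b : Beh P E V X) : omerge none (some b) (some b)
  | ss {b1 b2 b : Beh P E V X} : merge b1 b2 b → omerge (some b1) (some b2) (some b)
end

mutual
/-- The branching order on behaviours: `mb B B'` means `B` offers at least the
branches of `B'` (written `B ≽ B'`). -/
inductive mb {P E V X : Type} : Beh P E V X → Beh P E V X → Prop
  | endB : mb .endB .endB
  | send {B B'} (p : P) (e : E) : mb B B' → mb (.send p e B) (.send p e B')
  | recv {B B'} (p : P) (x : V) : mb B B' → mb (.recv p x B) (.recv p x B')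
  | sel {B B'} (p : P) (l : Bool) : mb B B' → mb (.sel p l B) (.sel p l B')
  | branch_nn (p : P) (mL mR : Option (Beh P E V X)) :
      mb (.branch p mL mR) (.branch p none none)
  | branch_ns {Br Br'} (p : P) (mL : Option (Beh P E V X)) :
      mb Br Br' → mb (.branch p mL (some Br)) (.branch p none (some Br'))
  | branch_sn {Bl Bl'} (p : P) (mR : Option (Beh P E V X)) :
      mb Bl Bl' → mb (.branch p (some Bl) mR) (.branch p (some Bl') none)
  | branch_ss {Bl Bl' Br Br'} (p : P) :
      mb Bl Bl' → mb Br Br' →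
      mb (.branch p (some Bl) (some Br)) (.branch p (some Bl') (some Br'))
  | cond {B1 B1' B2 B2'} (e : E) :
      mb B1 B1' → mb B2 B2' → mb (.cond e B1 B2) (.cond e B1' B2')
  | call (x : X) : mb (.call x) (.call x)
end

namespace Stmt13Aux

theorem mb_refl {P E V X : Type} : ∀ b : Beh P E V X, mb b b
  | .endB => .endB
  | .send p e b => .send p e (mb_refl b)
  | .recv p x b => .recv p x (mb_refl b)
  | .sel p l b => .sel p l (mb_refl b)
  | .branch p none none => .branch_nn p none none
  | .branch p none (some r) => .branch_ns p none (mb_refl r)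
  | .branch p (some l) none => .branch_sn p none (mb_refl l)
  | .branch p (some l) (some r) => .branch_ss p (mb_refl l) (mb_refl r)
  | .cond e b1 b2 => .cond e (mb_refl b1) (mb_refl b2)
  | .call x => .call x

/-- Weak componentwise order used to reconstruct `mb` between branches. -/
def OmbW {P E V X : Type} (mc c : Option (Beh P E V X)) : Prop :=
  c = none ∨ ∃ b b', mc = some b ∧ c = some b' ∧ mb b b'

theorem branch_of {P E V X : Type} {mL mR l r : Option (Beh P E V X)} (p : P)
    (hl : OmbW mL l) (hr : OmbW mR r) :
    mb (.branch p mL mR) (.branch p l r) := by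
  rcases hl with rfl | ⟨b, b', rfl, rfl, hb⟩ <;>
    rcases hr with rfl | ⟨c, c', rfl, rfl, hc⟩
  · exact .branch_nn p mL mR
  · exact .branch_ns p mL hc
  · exact .branch_sn p mR hb
  · exact .branch_ss p hb hc

/-- Any merge result dominates both arguments. -/
theorem merge_mb {P E V X : Type} {b1 b2 b : Beh P E V X}
    (h : merge b1 b2 b) : mb b b1 ∧ mb b b2 := by
  induction h using merge.rec
    (motive_2 := fun o1 o2 o _ => OmbW o o1 ∧ OmbW o o2) with
  | endB => exact ⟨.endB, .endB⟩
  | send p e _ ih => exact ⟨.send p e ih.1, .send p e ih.2⟩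
  | recv p x _ ih => exact ⟨.recv p x ih.1, .recv p x ih.2⟩
  | sel p l _ ih => exact ⟨.sel p l ih.1, .sel p l ih.2⟩
  | branch p _ _ ihl ihr =>
      exact ⟨branch_of p ihl.1 ihr.1, branch_of p ihl.2 ihr.2⟩
  | cond e _ _ iht ihe =>
      exact ⟨.cond e iht.1 ihe.1, .cond e iht.2 ihe.2⟩
  | call x => exact ⟨.call x, .call x⟩
  | nn => exact ⟨Or.inl rfl, Or.inl rfl⟩
  | sn b => exact ⟨Or.inr ⟨b, b, rfl, rfl, mb_refl b⟩, Or.inl rfl⟩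
  | ns b => exact ⟨Or.inl rfl, Or.inr ⟨b, b, rfl, rfl, mb_refl b⟩⟩
  | ss h ih => exact ⟨Or.inr ⟨_, _, rfl, rfl, ih.1⟩, Or.inr ⟨_, _, rfl, rfl, ih.2⟩⟩

/-- Strong componentwise order, carrying an induction hypothesis. -/
def OSide {P E V X : Type} (mc c1 : Option (Beh P E V X)) : Prop :=
  c1 = none ∨ ∃ b b1, mc = some b ∧ c1 = some b1 ∧ mb b b1 ∧
    (∀ b2, mb b b2 → ∃ b', merge b1 b2 b' ∧ mb b b')

theorem comp {P E V X : Type} {mc c1 c2 : Option (Beh P E V X)}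
    (h1 : OSide mc c1) (h2 : OmbW mc c2) :
    ∃ c, omerge c1 c2 c ∧ OmbW mc c := by
  rcases h1 with rfl | ⟨b, b1, rfl, rfl, hb1, ih⟩
  · rcases h2 with rfl | ⟨b, b2, rfl, rfl, hb2⟩
    · exact ⟨none, .nn, Or.inl rfl⟩
    · exact ⟨some b2, .ns b2, Or.inr ⟨b, b2, rfl, rfl, hb2⟩⟩
  · rcases h2 with rfl | ⟨b', b2, hb, rfl, hb2⟩
    · exact ⟨some b1, .sn b1, Or.inr ⟨b, b1, rfl, rfl, hb1⟩⟩
    · cases hb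
      obtain ⟨b', hm, hmb⟩ := ih b2 hb2
      exact ⟨some b', .ss hm, Or.inr ⟨b, b', rfl, rfl, hmb⟩⟩

theorem branch_ex {P E V X : Type} {mL mR l1 r1 : Option (Beh P E V X)} (p : P)
    (sl : OSide mL l1) (sr : OSide mR r1) :
    ∀ B2, mb (.branch p mL mR) B2 →
      ∃ B', merge (.branch p l1 r1) B2 B' ∧ mb (.branch p mL mR) B' := by
  intro B2 h2
  cases h2 with
  | branch_nn =>
      obtain ⟨cl, hcl, wl⟩ := comp sl (Or.inl rfl)
      obtain ⟨cr, hcr, wr⟩ := comp sr (Or.inl rfl)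
      exact ⟨.branch p cl cr, .branch p hcl hcr, branch_of p wl wr⟩
  | branch_ns _ _ h =>
      obtain ⟨cl, hcl, wl⟩ := comp sl (Or.inl rfl)
      obtain ⟨cr, hcr, wr⟩ := comp sr (Or.inr ⟨_, _, rfl, rfl, h⟩)
      exact ⟨.branch p cl cr, .branch p hcl hcr, branch_of p wl wr⟩
  | branch_sn _ _ h =>
      obtain ⟨cl, hcl, wl⟩ := comp sl (Or.inr ⟨_, _, rfl, rfl, h⟩)
      obtain ⟨cr, hcr, wr⟩ := comp sr (Or.inl rfl)
      exact ⟨.branch p cl cr, .branch p hcl hcr, branch_of p wl wr⟩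
  | branch_ss _ hl hr =>
      obtain ⟨cl, hcl, wl⟩ := comp sl (Or.inr ⟨_, _, rfl, rfl, hl⟩)
      obtain ⟨cr, hcr, wr⟩ := comp sr (Or.inr ⟨_, _, rfl, rfl, hr⟩)
      exact ⟨.branch p cl cr, .branch p hcl hcr, branch_of p wl wr⟩

theorem ex {P E V X : Type} {B B1 : Beh P E V X} (h1 : mb B B1) :
    ∀ B2, mb B B2 → ∃ B', merge B1 B2 B' ∧ mb B B' := by
  induction h1 with
  | endB =>
      intro B2 h2; cases h2; exact ⟨.endB, .endB, .endB⟩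
  | send p e _ ih =>
      intro B2 h2
      cases h2 with
      | send _ _ h =>
          obtain ⟨b', hm, hmb⟩ := ih _ h
          exact ⟨.send p e b', .send p e hm, .send p e hmb⟩
  | recv p x _ ih =>
      intro B2 h2
      cases h2 with
      | recv _ _ h =>
          obtain ⟨b', hm, hmb⟩ := ih _ h
          exact ⟨.recv p x b', .recv p x hm, .recv p x hmb⟩
  | sel p l _ ih =>
      intro B2 h2
      cases h2 with
      | sel _ _ h =>
          obtain ⟨b', hm, hmb⟩ := ih _ h
          exact ⟨.sel p l b', .sel p l hm, .sel p l hmb⟩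
  | cond e _ _ ih1 ih2 =>
      intro B2 h2
      cases h2 with
      | cond _ ht he =>
          obtain ⟨bt, hmt, hbt⟩ := ih1 _ ht
          obtain ⟨be, hme, hbe⟩ := ih2 _ he
          exact ⟨.cond e bt be, .cond e hmt hme, .cond e hbt hbe⟩
  | call x =>
      intro B2 h2; cases h2; exact ⟨.call x, .call x, .call x⟩
  | branch_nn p mL mR =>
      exact branch_ex p (Or.inl rfl) (Or.inl rfl)
  | branch_ns p mL h ih =>
      exact branch_ex p (Or.inl rfl) (Or.inr ⟨_, _, rfl, rfl, h, ih⟩)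
  | branch_sn p mR h ih =>
      exact branch_ex p (Or.inr ⟨_, _, rfl, rfl, h, ih⟩) (Or.inl rfl)
  | branch_ss p hl hr ihl ihr =>
      exact branch_ex p (Or.inr ⟨_, _, rfl, rfl, hl, ihl⟩)
        (Or.inr ⟨_, _, rfl, rfl, hr, ihr⟩)

end Stmt13Aux

theorem stmt13 {P E V X : Type} (B B1 B2 : Beh P E V X)
    (h1 : mb B B1) (h2 : mb B B2) :
    ∃ B' : Beh P E V X, merge B1 B2 B' ∧ mb B B' ∧
      ∀ B'' : Beh P E V X, merge B1 B2 B'' → mb B'' B1 ∧ mb B'' B2 := by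
  obtain ⟨B', hm, hb⟩ := Stmt13Aux.ex h1 B2 h2
  exact ⟨B', hm, hb, fun B'' h => Stmt13Aux.merge_mb h⟩
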